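/- Let n, q, m11, m12, m21, m22 be naturals with n ≥ 1, q ≥ 1 and m11, m12, m21, m22 ≤ q. Let W1, W2 be random variables with values in nonempty finite types and let X1, X2 : Ω → (Fin n → (Fin q → ZMod 2)) be random variables such that the pair (W1, X1) is independent of the pair (W2, X2). Define the channel outputs pointwise by y1 t = D_{m11}(X1 t) + D_{m12}(X2 t) and y2 t = D_{m21}(X1 t) + D_{m22}(X2 t). Then ( I(W1 : y1) − I(W1 : y2) ) + I(X1 : y1) + I(X2 : y2) ≤ n · ( max(m11, m12) + (m11 − m21)^+ + (m22 − m12)^+ ) · log 2. -/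

import Mathlib

/-
Write `A = D_{m11} X1`, `B = D_{m12} X2`, `C = D_{m21} X1`, `E = D_{m22} X2`, so that
`y1 = A + B` and `y2 = C + E`. Since `(W1, X1)` is independent of `X2`, `H(y1 | X1) = H(B)`,
`H(y2 | X2) = H(C)`, and the genie `(W1, C)` gives `H(y1 | W1, C) ≥ H(y1 | W1, X1) = H(B)`.
With subadditivity and submodularity this bounds the left-hand side by
`H(y1) + H(A | C) + H(E | B)`. Finally `y1` is carried by the top `max(m11, m12)` bits of each
block, while `A` is determined by `C` and `(m11 - m21)^+` more bits of `X1` per block, and `E` by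
`B` and `(m22 - m12)^+` more bits of `X2`.
-/

open MeasureTheory ProbabilityTheory Real

/-- Shannon entropy (natural logarithm) of a random variable with values in a finite type. -/
noncomputable def entropy {Ω : Type*} [MeasurableSpace Ω] (μ : Measure Ω)
    {S : Type*} [Fintype S] (X : Ω → S) : ℝ :=
  - ∑ x : S, ((μ (X ⁻¹' {x})).toReal * Real.log (μ (X ⁻¹' {x})).toReal)

/-- Conditional entropy H(X | Y) := H(⟨X,Y⟩) − H(Y). -/
noncomputable def condEntropy {Ω : Type*} [MeasurableSpace Ω] (μ : Measure Ω)
    {S T : Type*} [Fintype S] [Fintype T] (X : Ω → S) (Y : Ω → T) : ℝ :=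
  entropy μ (fun ω => (X ω, Y ω)) - entropy μ Y

/-- Mutual information I(X : Y) := H(X) + H(Y) − H(⟨X,Y⟩). -/
noncomputable def mutualInfo {Ω : Type*} [MeasurableSpace Ω] (μ : Measure Ω)
    {S T : Type*} [Fintype S] [Fintype T] (X : Ω → S) (Y : Ω → T) : ℝ :=
  entropy μ X + entropy μ Y - entropy μ (fun ω => (X ω, Y ω))

/-- The shift map `D_m` : multiplication by `S^(q-m)` with `S` the `q × q` lower shift matrix. -/
def Dmap (q m : ℕ) (x : Fin q → ZMod 2) : Fin q → ZMod 2 :=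
  fun i => if _ : q - m ≤ (i : ℕ) then
      x ⟨(i : ℕ) - (q - m), Nat.lt_of_le_of_lt (Nat.sub_le _ _) i.isLt⟩
    else 0

open Finset Function

theorem sum_mul_log_le_sum_mul_log_of_sum_le {ι : Type*} [Fintype ι] {p r : ι → ℝ}
    (hp : ∀ i, 0 ≤ p i) (hr : ∀ i, 0 ≤ r i) (hpr : ∀ i, 0 < p i → 0 < r i)
    (hsum : ∑ i, r i ≤ ∑ i, p i) :
    ∑ i, p i * log (r i) ≤ ∑ i, p i * log (p i) := by
  have key : ∀ i, p i * log (r i) - p i * log (p i) ≤ r i - p i := by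
    intro i
    rcases (hp i).eq_or_lt with h | h
    · simp [← h, hr i]
    · have hri := hpr i h
      have hlog := log_le_sub_one_of_pos (div_pos hri h)
      rw [log_div hri.ne' h.ne'] at hlog
      calc p i * log (r i) - p i * log (p i) = p i * (log (r i) - log (p i)) := by ring
        _ ≤ p i * (r i / p i - 1) := mul_le_mul_of_nonneg_left hlog h.le
        _ = r i - p i := by field_simp
  have := Finset.sum_le_sum fun i (_ : i ∈ univ) => key i
  rw [sum_sub_distrib, sum_sub_distrib] at this
  linarith

theorem measureReal_preimage_singleton_le_comp {Ω S T : Type*} [MeasurableSpace Ω]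
    {μ : Measure Ω} [IsFiniteMeasure μ] (X : Ω → S) (f : S → T) (x : S) :
    μ.real (X ⁻¹' {x}) ≤ μ.real ((fun ω => f (X ω)) ⁻¹' {f x}) :=
  measureReal_mono fun ω (h : X ω = x) => by simp [h]

theorem entropy_eq_neg_sum {Ω S : Type*} [MeasurableSpace Ω] (μ : Measure Ω) [Fintype S]
    (X : Ω → S) : entropy μ X = -∑ x, μ.real (X ⁻¹' {x}) * log (μ.real (X ⁻¹' {x})) := rfl

theorem entropy_eq_sum_negMulLog {Ω S : Type*} [MeasurableSpace Ω] (μ : Measure Ω) [Fintype S]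
    (X : Ω → S) : entropy μ X = ∑ x, negMulLog (μ.real (X ⁻¹' {x})) := by
  simp [entropy, negMulLog, measureReal_def]

theorem entropy_const {Ω S : Type*} [MeasurableSpace Ω] {μ : Measure Ω} [IsProbabilityMeasure μ]
    [Fintype S] (c : S) : entropy μ (fun _ => c) = 0 := by
  classical
  rw [entropy_eq_sum_negMulLog, sum_eq_single c]
  · simp
  · intro x _ hx
    simp [Set.preimage_const_of_notMem (Set.mem_singleton_iff.not.2 (Ne.symm hx))]
  · simp

section Entropy

variable {Ω : Type*} [MeasurableSpace Ω] {μ : Measure Ω} [IsProbabilityMeasure μ]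
  {S T U : Type*} [Fintype S] [MeasurableSpace S] [MeasurableSingletonClass S]
  [Fintype T] [Fintype U]

theorem sum_measureReal_preimage_singleton_eq_one {X : Ω → S} (hX : Measurable X) :
    ∑ x, μ.real (X ⁻¹' {x}) = 1 := by
  rw [sum_measureReal_preimage_singleton _ fun x _ => hX (measurableSet_singleton x)]
  simp

theorem sum_measureReal_comp_preimage_mul {X : Ω → S} (hX : Measurable X) (f : S → T)
    (φ : T → ℝ) :
    ∑ y, μ.real ((fun ω => f (X ω)) ⁻¹' {y}) * φ y = ∑ x, μ.real (X ⁻¹' {x}) * φ (f x) := by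
  classical
  rw [← sum_fiberwise univ f]
  refine sum_congr rfl fun y _ => ?_
  have hpre : (fun ω => f (X ω)) ⁻¹' {y} = X ⁻¹' ↑({x | f x = y} : Finset S) := by ext; simp
  rw [hpre, ← sum_measureReal_preimage_singleton _ fun x _ => hX (measurableSet_singleton x),
    sum_mul]
  exact sum_congr rfl fun x hx => by rw [(mem_filter.1 hx).2]

theorem sum_measureReal_mul_log_comp {X : Ω → S} (hX : Measurable X) (f : S → T) :
    ∑ x, μ.real (X ⁻¹' {x}) * log (μ.real ((fun ω => f (X ω)) ⁻¹' {f x})) =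
      -entropy μ (fun ω => f (X ω)) := by
  rw [← sum_measureReal_comp_preimage_mul hX f
    fun y => log (μ.real ((fun ω => f (X ω)) ⁻¹' {y})), entropy_eq_neg_sum, neg_neg]

theorem entropy_comp_le (f : S → T) {X : Ω → S} (hX : Measurable X := by fun_prop) :
    entropy μ (fun ω => f (X ω)) ≤ entropy μ X := by
  rw [← neg_le_neg_iff, ← sum_measureReal_mul_log_comp hX f, entropy_eq_neg_sum, neg_neg]
  refine sum_le_sum fun x _ => ?_
  rcases (measureReal_nonneg (μ := μ) (s := X ⁻¹' {x})).eq_or_lt with h | h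
  · simp [← h]
  · exact mul_le_mul_of_nonneg_left
      (log_le_log h (measureReal_preimage_singleton_le_comp X f x)) h.le

theorem entropy_comp_of_leftInverse [MeasurableSpace T] [MeasurableSingletonClass T] {f : S → T}
    {g : T → S} (hfg : LeftInverse g f) {X : Ω → S} (hX : Measurable X := by fun_prop) :
    entropy μ (fun ω => f (X ω)) = entropy μ X := by
  refine le_antisymm (entropy_comp_le f hX) ?_
  calc entropy μ X = entropy μ (fun ω => g (f (X ω))) := by simp only [hfg _]
    _ ≤ entropy μ (fun ω => f (X ω)) := entropy_comp_le g (measurable_of_finite f |>.comp hX)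

theorem entropy_le_log_card {X : Ω → S} (hX : Measurable X := by fun_prop) :
    entropy μ X ≤ log (Fintype.card S) := by
  have hsum := sum_measureReal_preimage_singleton_eq_one (μ := μ) hX
  have hgibbs := sum_mul_log_le_sum_mul_log_of_sum_le (p := fun x => μ.real (X ⁻¹' {x}))
    (r := fun _ => (Fintype.card S : ℝ)⁻¹) (fun _ => measureReal_nonneg) (fun _ => by positivity)
    (fun x _ => by
      have : (0 : ℝ) < Fintype.card S := by exact_mod_cast Fintype.card_pos_iff.2 ⟨x⟩
      positivity) ?_
  · rw [← sum_mul, hsum, log_inv] at hgibbs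
    rw [entropy_eq_neg_sum]
    linarith
  · simpa [hsum, ← div_eq_mul_inv] using div_self_le_one (Fintype.card S : ℝ)

theorem entropy_pair_eq_add_of_indepFun [MeasurableSpace T] [MeasurableSingletonClass T]
    {X : Ω → S} {Y : Ω → T} (h : IndepFun X Y μ)
    (hX : Measurable X := by fun_prop) (hY : Measurable Y := by fun_prop) :
    entropy μ (fun ω => (X ω, Y ω)) = entropy μ X + entropy μ Y := by
  have hprod : ∀ x y, μ.real ((fun ω => (X ω, Y ω)) ⁻¹' {(x, y)}) =
      μ.real (X ⁻¹' {x}) * μ.real (Y ⁻¹' {y}) := by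
    intro x y
    rw [← Set.singleton_prod_singleton, Set.mk_preimage_prod, measureReal_def,
      h.measure_inter_preimage_eq_mul _ _ (measurableSet_singleton x)
        (measurableSet_singleton y), ENNReal.toReal_mul]
    rfl
  simp only [entropy_eq_sum_negMulLog, Fintype.sum_prod_type, hprod, negMulLog_mul,
    sum_add_distrib, ← mul_sum, ← sum_mul, sum_measureReal_preimage_singleton_eq_one hX,
    sum_measureReal_preimage_singleton_eq_one hY, one_mul]

theorem sum_measureReal_pair_preimage_singleton [MeasurableSpace T] [MeasurableSingletonClass T]
    {X : Ω → S} {Y : Ω → T} (y : T) (hX : Measurable X := by fun_prop)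
    (hY : Measurable Y := by fun_prop) :
    ∑ x, μ.real ((fun ω => (X ω, Y ω)) ⁻¹' {(x, y)}) = μ.real (Y ⁻¹' {y}) := by
  classical
  have hpre : (fun ω => (X ω, Y ω)) ⁻¹' ↑({w | w.2 = y} : Finset (S × T)) = Y ⁻¹' {y} := by
    ext; simp
  rw [← hpre, ← sum_measureReal_preimage_singleton _
    fun w _ => (hX.prodMk hY) (measurableSet_singleton w), sum_filter, Fintype.sum_prod_type]
  simp

theorem entropy_pair_comm [MeasurableSpace T] [MeasurableSingletonClass T] {X : Ω → S}
    {Y : Ω → T} (hX : Measurable X := by fun_prop) (hY : Measurable Y := by fun_prop) :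
    entropy μ (fun ω => (X ω, Y ω)) = entropy μ (fun ω => (Y ω, X ω)) :=
  (entropy_comp_of_leftInverse (f := Prod.swap) (g := Prod.swap) Prod.swap_swap).symm

theorem sum_measureReal_mul_div_le_one [MeasurableSpace T] [MeasurableSingletonClass T]
    [MeasurableSpace U] [MeasurableSingletonClass U] {X : Ω → S} {Z : Ω → U} (g : U → T)
    (hX : Measurable X := by fun_prop) (hZ : Measurable Z := by fun_prop) :
    ∑ w : S × U, μ.real ((fun ω => (X ω, g (Z ω))) ⁻¹' {(w.1, g w.2)}) * μ.real (Z ⁻¹' {w.2}) /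
      μ.real ((fun ω => g (Z ω)) ⁻¹' {g w.2}) ≤ 1 := by
  rw [Fintype.sum_prod_type_right, ← sum_measureReal_preimage_singleton_eq_one (μ := μ) hZ]
  refine sum_le_sum fun z _ => ?_
  dsimp only
  rw [← sum_div, ← sum_mul, sum_measureReal_pair_preimage_singleton (g z), mul_div_right_comm]
  exact mul_le_of_le_one_left measureReal_nonneg (div_self_le_one _)

theorem condEntropy_le_condEntropy_comp [MeasurableSpace T] [MeasurableSingletonClass T]
    [MeasurableSpace U] [MeasurableSingletonClass U] {X : Ω → S} {Z : Ω → U} (g : U → T)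
    (hX : Measurable X := by fun_prop) (hZ : Measurable Z := by fun_prop) :
    condEntropy μ X Z ≤ condEntropy μ X (fun ω => g (Z ω)) := by
  set V : Ω → S × U := fun ω => (X ω, Z ω)
  have hV : Measurable V := hX.prodMk hZ
  set P : S × U → ℝ := fun w => μ.real (V ⁻¹' {w})
  set Q : S × T → ℝ := fun v => μ.real ((fun ω => (X ω, g (Z ω))) ⁻¹' {v})
  set R : U → ℝ := fun z => μ.real (Z ⁻¹' {z})
  set Rg : T → ℝ := fun t => μ.real ((fun ω => g (Z ω)) ⁻¹' {t})
  have hQ : ∑ w, P w * log (Q (w.1, g w.2)) = -entropy μ (fun ω => (X ω, g (Z ω))) :=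
    sum_measureReal_mul_log_comp hV fun w => (w.1, g w.2)
  have hR : ∑ w, P w * log (R w.2) = -entropy μ Z := sum_measureReal_mul_log_comp hV Prod.snd
  have hRg : ∑ w, P w * log (Rg (g w.2)) = -entropy μ (fun ω => g (Z ω)) :=
    sum_measureReal_mul_log_comp hV fun w => g w.2
  have hP : ∑ w, P w * log (P w) = -entropy μ V := by rw [entropy_eq_neg_sum, neg_neg]
  have hle : ∀ w, P w ≤ Q (w.1, g w.2) ∧ P w ≤ R w.2 ∧ R w.2 ≤ Rg (g w.2) := fun w =>
    ⟨measureReal_preimage_singleton_le_comp V (fun w => (w.1, g w.2)) w,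
      measureReal_preimage_singleton_le_comp V Prod.snd w,
      measureReal_preimage_singleton_le_comp Z g w.2⟩
  have hsplit : ∑ w, P w * log (Q (w.1, g w.2) * R w.2 / Rg (g w.2)) =
      ∑ w, P w * log (Q (w.1, g w.2)) + ∑ w, P w * log (R w.2) - ∑ w, P w * log (Rg (g w.2)) := by
    rw [← sum_add_distrib, ← sum_sub_distrib]
    refine sum_congr rfl fun w _ => ?_
    rcases (measureReal_nonneg (μ := μ) (s := V ⁻¹' {w})).eq_or_lt with h | h
    · simp [P, ← h]
    · obtain ⟨h1, h2, h3⟩ := hle w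
      have hQ := h.trans_le h1
      have hR := h.trans_le h2
      rw [log_div (mul_pos hQ hR).ne' (hR.trans_le h3).ne', log_mul hQ.ne' hR.ne']
      ring
  -- Gibbs' inequality for the law of `(X, Z)` against the weights `P(X, g Z) P(Z) / P(g Z)`.
  have hgibbs := sum_mul_log_le_sum_mul_log_of_sum_le (fun _ => measureReal_nonneg)
    (fun _ => by positivity) (fun w hw => by
      obtain ⟨h1, h2, h3⟩ := hle w
      have hQ := hw.trans_le h1
      have hR := hw.trans_le h2
      have hRg := hR.trans_le h3
      positivity)
    ((sum_measureReal_mul_div_le_one g).trans (sum_measureReal_preimage_singleton_eq_one hV).ge)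
  rw [hsplit, hQ, hR, hRg] at hgibbs
  unfold condEntropy
  linarith

theorem entropy_pair_le_add [MeasurableSpace T] [MeasurableSingletonClass T] {X : Ω → S}
    {Y : Ω → T} (hX : Measurable X := by fun_prop) (hY : Measurable Y := by fun_prop) :
    entropy μ (fun ω => (X ω, Y ω)) ≤ entropy μ X + entropy μ Y := by
  have h := condEntropy_le_condEntropy_comp (μ := μ) (X := X) (Z := Y) fun _ => ()
  have hX' : entropy μ (fun ω => (X ω, ())) = entropy μ X :=
    entropy_comp_of_leftInverse (f := fun x => (x, ())) (g := Prod.fst) fun _ => rfl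
  unfold condEntropy at h
  rw [hX', entropy_const (μ := μ)] at h
  linarith

theorem entropy_le_add_of_eq [MeasurableSpace T] [MeasurableSingletonClass T] {X : Ω → S}
    {Y : Ω → T} {Z : Ω → U} (f : S → T → U) (hZ : ∀ ω, Z ω = f (X ω) (Y ω))
    (hX : Measurable X := by fun_prop) (hY : Measurable Y := by fun_prop) :
    entropy μ Z ≤ entropy μ X + entropy μ Y := by
  obtain rfl := funext hZ
  exact (entropy_comp_le (fun p : S × T => f p.1 p.2) (hX.prodMk hY)).trans
    (entropy_pair_le_add hX hY)

theorem entropy_le_log_card_of_eq {X : Ω → S} {Y : Ω → T} (f : S → T) (hY : ∀ ω, Y ω = f (X ω))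
    (hX : Measurable X := by fun_prop) :
    entropy μ Y ≤ log (Fintype.card S) := by
  obtain rfl := funext hY
  exact (entropy_comp_le f hX).trans (entropy_le_log_card hX)

theorem condEntropy_le_log_card_of_eq [MeasurableSpace T] [MeasurableSingletonClass T]
    {X : Ω → S} {Y : Ω → T} {Z : Ω → U} (f : S → T → U) (hZ : ∀ ω, Z ω = f (X ω) (Y ω))
    (hX : Measurable X := by fun_prop) (hY : Measurable Y := by fun_prop) :
    condEntropy μ Z X ≤ log (Fintype.card T) := by
  have h := entropy_le_add_of_eq (μ := μ) (Z := fun ω => (Z ω, X ω)) (fun x y => (f x y, x))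
    (fun ω => by rw [hZ])
  have := entropy_le_log_card (μ := μ) hY
  unfold condEntropy
  linarith

theorem mutualInfo_eq_entropy_sub_condEntropy [MeasurableSpace T] [MeasurableSingletonClass T]
    {X : Ω → S} {Y : Ω → T} (hX : Measurable X := by fun_prop)
    (hY : Measurable Y := by fun_prop) :
    mutualInfo μ X Y = entropy μ Y - condEntropy μ Y X := by
  rw [mutualInfo, condEntropy, entropy_pair_comm hX hY]
  ring

theorem condEntropy_eq_of_indepFun_add {G : Type*} [AddGroup G] [Fintype G] [MeasurableSpace G]
    [MeasurableSingletonClass G] {X : Ω → S} {Y Z : Ω → G} (h : IndepFun X Y μ) (f : S → G)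
    (hZ : ∀ ω, Z ω = f (X ω) + Y ω) (hX : Measurable X := by fun_prop)
    (hY : Measurable Y := by fun_prop) :
    condEntropy μ Z X = entropy μ Y := by
  obtain rfl := funext hZ
  have hshear : entropy μ (fun ω => (f (X ω) + Y ω, X ω)) = entropy μ (fun ω => (Y ω, X ω)) :=
    entropy_comp_of_leftInverse (μ := μ) (X := fun ω => (Y ω, X ω))
      (f := fun p => (f p.2 + p.1, p.2)) (g := fun p => (-f p.2 + p.1, p.2)) (fun p => by simp)
      (hY.prodMk hX)
  rw [condEntropy, hshear, entropy_pair_eq_add_of_indepFun h.symm]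
  ring

end Entropy

section DeterministicChannel

variable {Ω : Type*} [MeasurableSpace Ω] {μ : Measure Ω} [IsProbabilityMeasure μ]
  {D S T G : Type*} [Fintype D] [MeasurableSpace D] [MeasurableSingletonClass D]
  [Fintype S] [MeasurableSpace S] [MeasurableSingletonClass S]
  [Fintype T] [MeasurableSpace T] [MeasurableSingletonClass T]
  [AddCommGroup G] [Fintype G] [MeasurableSpace G] [MeasurableSingletonClass G]

theorem mutualInfo_sub_add_mutualInfo_le {W : Ω → D} {X₁ : Ω → S} {X₂ : Ω → T}
    (hW : Measurable W) (hX₁ : Measurable X₁) (hX₂ : Measurable X₂)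
    (h : IndepFun (fun ω => (W ω, X₁ ω)) X₂ μ) (a c : S → G) (b e : T → G) {y₁ y₂ : Ω → G}
    (hy₁ : ∀ ω, y₁ ω = a (X₁ ω) + b (X₂ ω)) (hy₂ : ∀ ω, y₂ ω = c (X₁ ω) + e (X₂ ω)) :
    (mutualInfo μ W y₁ - mutualInfo μ W y₂) + mutualInfo μ X₁ y₁ + mutualInfo μ X₂ y₂ ≤
      entropy μ y₁ + condEntropy μ (fun ω => a (X₁ ω)) (fun ω => c (X₁ ω)) +
        condEntropy μ (fun ω => e (X₂ ω)) (fun ω => b (X₂ ω)) := by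
  have hy₁m : Measurable y₁ := by rw [funext hy₁]; fun_prop
  have hy₂m : Measurable y₂ := by rw [funext hy₂]; fun_prop
  have hX₁X₂ : IndepFun X₁ X₂ μ := h.comp measurable_snd measurable_id
  have hy₁X₁ : condEntropy μ y₁ X₁ = entropy μ (fun ω => b (X₂ ω)) :=
    condEntropy_eq_of_indepFun_add (hX₁X₂.comp measurable_id (measurable_of_finite b)) a hy₁
  have hy₂X₂ : condEntropy μ y₂ X₂ = entropy μ (fun ω => c (X₁ ω)) :=
    condEntropy_eq_of_indepFun_add (hX₁X₂.symm.comp measurable_id (measurable_of_finite c)) e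
      fun ω => by rw [hy₂, add_comm]
  have hy₂W : entropy μ (fun ω => (y₂ ω, W ω)) ≤
      entropy μ (fun ω => (W ω, c (X₁ ω))) + entropy μ (fun ω => e (X₂ ω)) :=
    entropy_le_add_of_eq (fun p x => (p.2 + x, p.1)) fun ω => by rw [hy₂]
  have hy₁WX₁ : condEntropy μ y₁ (fun ω => (W ω, X₁ ω)) = entropy μ (fun ω => b (X₂ ω)) :=
    condEntropy_eq_of_indepFun_add (h.comp measurable_id (measurable_of_finite b))
      (fun p => a p.2) hy₁
  have hgenie : condEntropy μ y₁ (fun ω => (W ω, X₁ ω)) ≤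
      condEntropy μ y₁ (fun ω => (W ω, c (X₁ ω))) :=
    condEntropy_le_condEntropy_comp fun p : D × S => (p.1, c p.2)
  have hsub : condEntropy μ (fun ω => c (X₁ ω)) (fun ω => (y₁ ω, W ω)) ≤
      condEntropy μ (fun ω => c (X₁ ω)) y₁ :=
    condEntropy_le_condEntropy_comp (Prod.fst : G × D → G)
  have hrelabel : entropy μ (fun ω => (c (X₁ ω), (y₁ ω, W ω))) =
      entropy μ (fun ω => (y₁ ω, (W ω, c (X₁ ω)))) :=
    entropy_comp_of_leftInverse (μ := μ) (X := fun ω => (y₁ ω, (W ω, c (X₁ ω))))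
      (f := fun p : G × D × G => (p.2.2, p.1, p.2.1))
      (g := fun p : G × G × D => (p.2.1, p.2.2, p.1)) fun _ => rfl
  have hCy₁ : entropy μ (fun ω => (c (X₁ ω), y₁ ω)) ≤
      entropy μ (fun ω => (a (X₁ ω), c (X₁ ω))) + entropy μ (fun ω => b (X₂ ω)) :=
    entropy_le_add_of_eq (fun p x => (p.2, p.1 + x)) fun ω => by rw [hy₁]
  have hE : entropy μ (fun ω => e (X₂ ω)) ≤ entropy μ (fun ω => (e (X₂ ω), b (X₂ ω))) :=
    entropy_comp_le (μ := μ) (X := fun ω => (e (X₂ ω), b (X₂ ω))) Prod.fst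
  rw [mutualInfo_eq_entropy_sub_condEntropy, mutualInfo_eq_entropy_sub_condEntropy,
    mutualInfo_eq_entropy_sub_condEntropy, mutualInfo_eq_entropy_sub_condEntropy, hy₁X₁, hy₂X₂]
  rw [hy₁WX₁] at hgenie
  unfold condEntropy at *
  linarith

end DeterministicChannel

section ShiftMap

variable {q : ℕ}

theorem Dmap_apply_of_lt {m : ℕ} (x : Fin q → ZMod 2) {i : Fin q} (hi : (i : ℕ) < q - m) :
    Dmap q m x i = 0 :=
  dif_neg (by omega)

theorem Dmap_congr {m : ℕ} {x x' : Fin q → ZMod 2} (h : ∀ i : Fin q, (i : ℕ) < m → x i = x' i) :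
    Dmap q m x = Dmap q m x' := by
  funext i
  unfold Dmap
  split_ifs
  · exact h _ (by simp only; omega)
  · rfl

/-- `D_m x` only sees `x 0, …, x (m - 1)`, and `D_{m'} x` already shows the first `m'` of them. -/
theorem exists_Dmap_eq_recover {m : ℕ} (hm : m ≤ q) (m' : ℕ) :
    ∃ (extra : (Fin q → ZMod 2) → Fin (m - m') → ZMod 2)
      (recover : (Fin q → ZMod 2) → (Fin (m - m') → ZMod 2) → Fin q → ZMod 2),
      ∀ x, Dmap q m x = recover (Dmap q m' x) (extra x) := by
  refine ⟨fun x j => x ⟨m' + j, by omega⟩, fun c r => Dmap q m fun i =>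
    if h : (i : ℕ) < m' then c ⟨q - m' + i, by omega⟩
    else if h' : (i : ℕ) - m' < m - m' then r ⟨i - m', h'⟩ else 0,
    fun x => Dmap_congr fun i hi => ?_⟩
  by_cases h : (i : ℕ) < m'
  · rw [dif_pos h, Dmap, dif_pos (Nat.le_add_right _ _)]
    congr 1; ext; simp only; omega
  · rw [dif_neg h, dif_pos (by omega)]
    congr 1; ext; simp only; omega

theorem exists_decode_encode {R : Type*} [Zero R] {M : ℕ} (hM : M ≤ q) :
    ∃ (encode : (Fin q → R) → Fin M → R) (decode : (Fin M → R) → Fin q → R),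
      ∀ v, (∀ i : Fin q, (i : ℕ) < q - M → v i = 0) → decode (encode v) = v := by
  refine ⟨fun v j => v ⟨q - M + j, by omega⟩,
    fun r i => if h : q - M ≤ (i : ℕ) then r ⟨i - (q - M), by omega⟩ else 0, fun v hv => ?_⟩
  funext i
  dsimp only
  split_ifs with h
  · congr 1; ext; simp only; omega
  · exact (hv i (by omega)).symm

end ShiftMap

theorem log_card_fin_fun_fin_fun_zmod_two (n k : ℕ) :
    log (Fintype.card (Fin n → Fin k → ZMod 2)) = n * k * log 2 := by
  simp only [Fintype.card_fun, ZMod.card, Fintype.card_fin, Nat.cast_pow, log_pow]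
  push_cast
  ring

section BlockShift

variable {Ω : Type*} [MeasurableSpace Ω] {μ : Measure Ω} [IsProbabilityMeasure μ] {n q : ℕ}

theorem condEntropy_Dmap_le {X : Ω → Fin n → Fin q → ZMod 2} (hX : Measurable X) {m : ℕ}
    (hm : m ≤ q) (m' : ℕ) :
    condEntropy μ (fun ω => Dmap q m ∘ X ω) (fun ω => Dmap q m' ∘ X ω) ≤
      n * (m - m' : ℕ) * log 2 := by
  obtain ⟨extra, recover, h⟩ := exists_Dmap_eq_recover hm m'
  rw [← log_card_fin_fun_fin_fun_zmod_two]
  exact condEntropy_le_log_card_of_eq (X := fun ω => Dmap q m' ∘ X ω)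
    (Y := fun ω => extra ∘ X ω) (fun c r t => recover (c t) (r t))
    fun ω => funext fun t => h (X ω t)

theorem entropy_Dmap_add_Dmap_le {X₁ X₂ : Ω → Fin n → Fin q → ZMod 2} (hX₁ : Measurable X₁)
    (hX₂ : Measurable X₂) {m₁ m₂ : ℕ} (h₁ : m₁ ≤ q) (h₂ : m₂ ≤ q) :
    entropy μ (fun ω => Dmap q m₁ ∘ X₁ ω + Dmap q m₂ ∘ X₂ ω) ≤ n * max m₁ m₂ * log 2 := by
  obtain ⟨encode, decode, h⟩ := exists_decode_encode (R := ZMod 2) (max_le h₁ h₂)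
  rw [← log_card_fin_fun_fin_fun_zmod_two]
  refine entropy_le_log_card_of_eq
    (X := fun ω => encode ∘ (Dmap q m₁ ∘ X₁ ω + Dmap q m₂ ∘ X₂ ω)) (fun r t => decode (r t))
    fun ω => funext fun t => (h _ fun i hi => ?_).symm
  simp only [Pi.add_apply, Function.comp_apply]
  rw [Dmap_apply_of_lt _ (by omega), Dmap_apply_of_lt _ (by omega), add_zero]

end BlockShift

theorem stmt7_general {Ω : Type*} [MeasurableSpace Ω] (μ : Measure Ω) [IsProbabilityMeasure μ]
    (n q m11 m12 m21 m22 : ℕ)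
    (h11 : m11 ≤ q) (h12 : m12 ≤ q) (h22 : m22 ≤ q)
    {D1 D2 : Type*} [Fintype D1] [MeasurableSpace D1] [DiscreteMeasurableSpace D1]
    [MeasurableSpace D2]
    (W1 : Ω → D1) (W2 : Ω → D2) (X1 X2 : Ω → (Fin n → Fin q → ZMod 2))
    (hW1 : Measurable W1) (hX1 : Measurable X1) (hX2 : Measurable X2)
    (hIndep : IndepFun (fun ω => (W1 ω, X1 ω)) (fun ω => (W2 ω, X2 ω)) μ)
    (y1 y2 : Ω → (Fin n → Fin q → ZMod 2))
    (hy1 : ∀ ω t, y1 ω t = Dmap q m11 (X1 ω t) + Dmap q m12 (X2 ω t))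
    (hy2 : ∀ ω t, y2 ω t = Dmap q m21 (X1 ω t) + Dmap q m22 (X2 ω t)) :
    (mutualInfo μ W1 y1 - mutualInfo μ W1 y2) + mutualInfo μ X1 y1 + mutualInfo μ X2 y2 ≤
      (n : ℝ) *
        (((max (m11 : ℤ) (m12 : ℤ) + max ((m11 : ℤ) - (m21 : ℤ)) 0 +
           max ((m22 : ℤ) - (m12 : ℤ)) 0) : ℤ) : ℝ) * Real.log 2 := by
  have hy₁ : ∀ ω, y1 ω = Dmap q m11 ∘ X1 ω + Dmap q m12 ∘ X2 ω := fun ω => funext (hy1 ω)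
  have hy₂ : ∀ ω, y2 ω = Dmap q m21 ∘ X1 ω + Dmap q m22 ∘ X2 ω := fun ω => funext (hy2 ω)
  have hbudget : max (m11 : ℤ) m12 + max ((m11 : ℤ) - m21) 0 + max ((m22 : ℤ) - m12) 0 =
      ((max m11 m12 + (m11 - m21) + (m22 - m12) : ℕ) : ℤ) := by
    push_cast
    omega
  calc _ ≤ entropy μ y1 +
        condEntropy μ (fun ω => Dmap q m11 ∘ X1 ω) (fun ω => Dmap q m21 ∘ X1 ω) +
        condEntropy μ (fun ω => Dmap q m22 ∘ X2 ω) (fun ω => Dmap q m12 ∘ X2 ω) :=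
      mutualInfo_sub_add_mutualInfo_le hW1 hX1 hX2 (hIndep.comp measurable_id measurable_snd)
        _ _ _ _ hy₁ hy₂
    _ ≤ n * max m11 m12 * log 2 + n * (m11 - m21 : ℕ) * log 2 + n * (m22 - m12 : ℕ) * log 2 := by
      gcongr
      · rw [funext hy₁]
        exact entropy_Dmap_add_Dmap_le hX1 hX2 h11 h12
      · exact condEntropy_Dmap_le hX1 h11 m21
      · exact condEntropy_Dmap_le hX2 h22 m12
    _ = _ := by
      rw [hbudget]
      push_cast
      ring

theorem stmt7 {Ω : Type*} [MeasurableSpace Ω] (μ : Measure Ω) [IsProbabilityMeasure μ]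
    (n q m11 m12 m21 m22 : ℕ) (hn : 1 ≤ n) (hq : 1 ≤ q)
    (h11 : m11 ≤ q) (h12 : m12 ≤ q) (h21 : m21 ≤ q) (h22 : m22 ≤ q)
    {D1 D2 : Type*} [Fintype D1] [Nonempty D1] [MeasurableSpace D1] [DiscreteMeasurableSpace D1]
    [Fintype D2] [Nonempty D2] [MeasurableSpace D2] [DiscreteMeasurableSpace D2]
    (W1 : Ω → D1) (W2 : Ω → D2) (X1 X2 : Ω → (Fin n → Fin q → ZMod 2))
    (hW1 : Measurable W1) (hW2 : Measurable W2) (hX1 : Measurable X1) (hX2 : Measurable X2)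
    (hIndep : IndepFun (fun ω => (W1 ω, X1 ω)) (fun ω => (W2 ω, X2 ω)) μ)
    (y1 y2 : Ω → (Fin n → Fin q → ZMod 2))
    (hy1 : ∀ ω t, y1 ω t = Dmap q m11 (X1 ω t) + Dmap q m12 (X2 ω t))
    (hy2 : ∀ ω t, y2 ω t = Dmap q m21 (X1 ω t) + Dmap q m22 (X2 ω t)) :
    (mutualInfo μ W1 y1 - mutualInfo μ W1 y2) + mutualInfo μ X1 y1 + mutualInfo μ X2 y2 ≤
      (n : ℝ) *
        (((max (m11 : ℤ) (m12 : ℤ) + max ((m11 : ℤ) - (m21 : ℤ)) 0 +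
           max ((m22 : ℤ) - (m12 : ℤ)) 0) : ℤ) : ℝ) * Real.log 2 :=
  stmt7_general μ n q m11 m12 m21 m22 h11 h12 h22 W1 W2 X1 X2 hW1 hX1 hX2 hIndep y1 y2 hy1 hy2
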